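/- arXiv:2301.01440 — 3 statements merged into one kernel-verified Lean document; each statement's English description precedes it below -/
import Mathlib

section
/- The scalar proximal operator g(y) (as defined with parameters q̄ > 0, δ̃ ≥ 0, μ > 0) equals the unique minimizer over q ∈ [−q̄, q̄] of the function f(q) = (1/(2α))q² + δ|q| + (1/(2μ))(q − v)², where y = (1/(1+μ/α))·v, δ̃ = δ/(1+μ/α), and α > 0; i.e., solving the one-dimensional regularized proximal problem yields the stated piecewise-linear formula. -/
/-- The scalar proximal operator of the incremental Volt/VAR rule. -/
noncomputable def proxOp (qb dt mu : ℝ) (y : ℝ) : ℝ :=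
  if y > qb + mu * dt then qb
  else if y > mu * dt then y - mu * dt
  else if y ≥ -(mu * dt) then 0
  else if y ≥ -qb - mu * dt then y + mu * dt
  else -qb

/-!
`f` is a positive multiple `(1/μ + 1/α)` of the proximal cost `(q - y)²/2 + μδ̃|q|` plus a constant.
`proxOp` satisfies the first-order optimality condition of that cost on `[-q̄, q̄]`, which together
with the quadratic term gives the growth bound `f q - f g ≥ (1/μ + 1/α)/2 · (q - g)²`;
minimality and uniqueness both follow.
-/

section QuadraticGrowth

variable {X : Type*} [MetricSpace X] {f : X → ℝ} {s : Set X} {a : X} {K : ℝ}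

theorem isMinOn_of_mul_sq_dist_le (hK : 0 ≤ K) (h : ∀ x ∈ s, K * dist x a ^ 2 ≤ f x - f a) :
    IsMinOn f s a := fun x hx => by
  have : 0 ≤ K * dist x a ^ 2 := by positivity
  simp only [Set.mem_ofPred_eq]
  linarith [h x hx]

theorem eq_of_isMinOn_of_mul_sq_dist_le (hK : 0 < K) (h : ∀ x ∈ s, K * dist x a ^ 2 ≤ f x - f a)
    (ha : a ∈ s) {x : X} (hx : x ∈ s) (hmin : IsMinOn f s x) : x = a := by
  have hle : f x ≤ f a := hmin ha
  have hsq : K * dist x a ^ 2 ≤ 0 := by linarith [h x hx]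
  have : dist x a ^ 2 = 0 := le_antisymm (nonpos_of_mul_nonpos_right hsq hK) (by positivity)
  exact dist_eq_zero.mp (pow_eq_zero_iff two_ne_zero |>.mp this)

end QuadraticGrowth

noncomputable def proxCost (t y q : ℝ) : ℝ := (q - y) ^ 2 / 2 + t * |q|

section ProxOp

variable {qb dt mu y q : ℝ}

theorem proxOp_mem_Icc (hqb : 0 ≤ qb) :
    proxOp qb dt mu y ∈ Set.Icc (-qb) qb := by
  unfold proxOp
  split_ifs <;> constructor <;> linarith

theorem proxOp_variational_ineq (ht : 0 ≤ mu * dt) (hq : q ∈ Set.Icc (-qb) qb) :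
    0 ≤ (proxOp qb dt mu y - y) * (q - proxOp qb dt mu y)
      + mu * dt * (|q| - |proxOp qb dt mu y|) := by
  obtain ⟨hq₁, hq₂⟩ := hq
  have hq_le : q ≤ |q| := le_abs_self q
  have hneg_q_le : -q ≤ |q| := neg_le_abs q
  have habs : |q| ≤ qb := abs_le.mpr ⟨hq₁, hq₂⟩
  unfold proxOp
  split_ifs with h₁ h₂ h₃ h₄
  · rw [abs_of_nonneg (by linarith : (0 : ℝ) ≤ qb)]
    nlinarith [mul_nonneg (by linarith : (0 : ℝ) ≤ qb - q) (by linarith : 0 ≤ y - qb - mu * dt)]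
  · rw [abs_of_pos (by linarith : (0 : ℝ) < y - mu * dt)]
    nlinarith
  · rw [abs_zero]
    have hy : |y| ≤ mu * dt := abs_le.mpr ⟨h₃, le_of_not_gt h₂⟩
    nlinarith [abs_mul_abs_self y, abs_mul y q, neg_abs_le (y * q), abs_nonneg q]
  · rw [abs_of_neg (by linarith : y + mu * dt < 0)]
    nlinarith
  · rw [abs_neg, abs_of_nonneg (by linarith : (0 : ℝ) ≤ qb)]
    nlinarith [mul_nonneg (by linarith : (0 : ℝ) ≤ q + qb) (by linarith : 0 ≤ -qb - mu * dt - y)]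

theorem sq_sub_proxOp_le_proxCost_sub (ht : 0 ≤ mu * dt) (hq : q ∈ Set.Icc (-qb) qb) :
    (q - proxOp qb dt mu y) ^ 2 / 2
      ≤ proxCost (mu * dt) y q - proxCost (mu * dt) y (proxOp qb dt mu y) := by
  unfold proxCost
  linear_combination proxOp_variational_ineq ht hq

end ProxOp

theorem objective_sub_eq_mul_proxCost_sub {α δ mu : ℝ} (hα : 0 < α) (hmu : 0 < mu) (v q p : ℝ) :
    (q ^ 2 / (2 * α) + δ * |q| + (q - v) ^ 2 / (2 * mu))
        - (p ^ 2 / (2 * α) + δ * |p| + (p - v) ^ 2 / (2 * mu))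
      = (1 / mu + 1 / α) * (proxCost (mu * (δ / (1 + mu / α))) ((1 / (1 + mu / α)) * v) q
          - proxCost (mu * (δ / (1 + mu / α))) ((1 / (1 + mu / α)) * v) p) := by
  unfold proxCost
  field_simp
  ring

/-- The scalar proximal operator `g(y)` with `y = α̃ v`, `δ̃ = δ α̃`, `α̃ = 1/(1+μ/α)`, is
the unique minimizer over `[-q̄, q̄]` of `f(q) = q²/(2α) + δ|q| + (q-v)²/(2μ)`. -/
theorem proxOp_is_unique_minimizer (α δ mu qb v : ℝ)
    (hα : 0 < α) (hδ : 0 ≤ δ) (hmu : 0 < mu) (hqb : 0 < qb) :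
    proxOp qb (δ / (1 + mu / α)) mu ((1 / (1 + mu / α)) * v) ∈ Set.Icc (-qb) qb ∧
    IsMinOn (fun q : ℝ => q ^ 2 / (2 * α) + δ * |q| + (q - v) ^ 2 / (2 * mu))
      (Set.Icc (-qb) qb)
      (proxOp qb (δ / (1 + mu / α)) mu ((1 / (1 + mu / α)) * v)) ∧
    ∀ q ∈ Set.Icc (-qb) qb,
      IsMinOn (fun q : ℝ => q ^ 2 / (2 * α) + δ * |q| + (q - v) ^ 2 / (2 * mu))
        (Set.Icc (-qb) qb) q →
      q = proxOp qb (δ / (1 + mu / α)) mu ((1 / (1 + mu / α)) * v) := by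
  set g := proxOp qb (δ / (1 + mu / α)) mu ((1 / (1 + mu / α)) * v)
  set f := fun q : ℝ => q ^ 2 / (2 * α) + δ * |q| + (q - v) ^ 2 / (2 * mu)
  have ht : 0 ≤ mu * (δ / (1 + mu / α)) := by positivity
  have hc : 0 < 1 / mu + 1 / α := by positivity
  have hmem : g ∈ Set.Icc (-qb) qb := proxOp_mem_Icc hqb.le
  have hgrowth : ∀ q ∈ Set.Icc (-qb) qb, (1 / mu + 1 / α) / 2 * dist q g ^ 2 ≤ f q - f g := by
    intro q hq
    rw [Real.dist_eq, sq_abs, objective_sub_eq_mul_proxCost_sub hα hmu, mul_comm_div]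
    exact mul_le_mul_of_nonneg_left (sq_sub_proxOp_le_proxCost_sub ht hq) hc.le
  exact ⟨hmem, isMinOn_of_mul_sq_dist_le (by positivity) hgrowth,
    fun q hq hmin => eq_of_isMinOn_of_mul_sq_dist_le (by positivity) hgrowth hmem hq hmin⟩
end

section
/- Let X be any real N×N matrix (possibly non-symmetric) with XXᵀ positive definite, and let UΛUᵀ be the eigendecomposition of XXᵀ (U orthogonal, Λ diagonal positive). If 0 < μ < λ_min(Λ^{-1/2}Uᵀ(X + Xᵀ)UΛ^{-1/2}), then ‖I − μX‖₂ < 1. -/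
/-!
Conjugating by `W = UΛ^{1/2}`, which satisfies `W Wᵀ = XXᵀ` and `W⁻¹ = Λ^{-1/2}Uᵀ`, turns the
hypothesis `M - μI ≻ 0` into `X + Xᵀ - μXXᵀ ≻ 0`. Multiplying by `μ > 0`, this says
`I - BBᵀ ≻ 0` for `B = I - μX`, i.e. `‖Bᵀv‖ < ‖v‖` for every `v ≠ 0`. By compactness of the unit
sphere the supremum defining `‖Bᵀ‖₂` is attained, so `‖B‖₂ = ‖Bᵀ‖₂ < 1`.
-/

open Matrix

noncomputable def specNorm {N : ℕ} (A : Matrix (Fin N) (Fin N) ℝ) : ℝ :=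
  ‖Matrix.toEuclideanCLM (𝕜 := ℝ) A‖

theorem ContinuousLinearMap.opNorm_lt_of_forall_norm_eq_one {E F : Type*}
    [NormedAddCommGroup E] [NormedSpace ℝ E] [FiniteDimensional ℝ E]
    [SeminormedAddCommGroup F] [NormedSpace ℝ F] (f : E →L[ℝ] F) {c : ℝ} (hc : 0 < c)
    (h : ∀ x, ‖x‖ = 1 → ‖f x‖ < c) : ‖f‖ < c := by
  rw [← f.sSup_sphere_eq_norm]
  cases subsingleton_or_nontrivial E
  · simpa [Metric.sphere_eq_empty_of_subsingleton one_ne_zero] using hc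
  rw [(isCompact_sphere 0 1).sSup_lt_iff_of_continuous
    (NormedSpace.sphere_nonempty.mpr zero_le_one) f.continuous.norm.continuousOn]
  exact fun x hx => h x (mem_sphere_zero_iff_norm.mp hx)

namespace Matrix

variable {n : Type*} [Fintype n] [DecidableEq n]

open scoped RealInnerProductSpace in
theorem norm_toEuclideanCLM_sq (B : Matrix n n ℝ) (x : EuclideanSpace ℝ n) :
    ‖toEuclideanCLM (𝕜 := ℝ) B x‖ ^ 2 = x ⬝ᵥ (Bᵀ * B) *ᵥ x := by
  rw [← real_inner_self_eq_norm_sq, ← inner_toEuclideanCLM, map_mul,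
    ← conjTranspose_eq_transpose_of_trivial, ← star_eq_conjTranspose, map_star,
    ContinuousLinearMap.star_eq_adjoint, mul_apply_eq_comp,
    ContinuousLinearMap.adjoint_inner_right]

theorem norm_toEuclideanCLM_lt_norm {B : Matrix n n ℝ} (hB : (1 - Bᵀ * B).PosDef)
    {x : EuclideanSpace ℝ n} (hx : x ≠ 0) : ‖toEuclideanCLM (𝕜 := ℝ) B x‖ < ‖x‖ := by
  have hpos := hB.dotProduct_mulVec_pos (x := x.ofLp) (by simpa using hx)
  rw [star_trivial, sub_mulVec, one_mulVec, dotProduct_sub, ← norm_toEuclideanCLM_sq] at hpos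
  have hx_sq : x.ofLp ⬝ᵥ x.ofLp = ‖x‖ ^ 2 := by
    rw [← real_inner_self_eq_norm_sq, EuclideanSpace.inner_eq_star_dotProduct, star_trivial]
  rw [hx_sq] at hpos
  exact lt_of_pow_lt_pow_left₀ 2 (norm_nonneg x) (by linarith)

variable {A : Matrix n n ℝ}

theorem IsHermitian.eigenvectorUnitary_mul_transpose (hA : A.IsHermitian) :
    (hA.eigenvectorUnitary : Matrix n n ℝ) * (hA.eigenvectorUnitary : Matrix n n ℝ)ᵀ = 1 := by
  simpa [star_eq_conjTranspose] using Unitary.mul_star_self_of_mem hA.eigenvectorUnitary.2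

theorem IsHermitian.eigenvectorUnitary_mul_diagonal_mul_transpose (hA : A.IsHermitian) :
    (hA.eigenvectorUnitary : Matrix n n ℝ) * diagonal hA.eigenvalues *
      (hA.eigenvectorUnitary : Matrix n n ℝ)ᵀ = A := by
  conv_rhs => rw [hA.spectral_theorem]
  simp [Unitary.conjStarAlgAut_apply, star_eq_conjTranspose]

theorem PosDef.posDef_whiten_sub_smul_one_iff (hA : A.PosDef) (S : Matrix n n ℝ) (μ : ℝ) :
    (diagonal (fun i => (√(hA.1.eigenvalues i))⁻¹) * (hA.1.eigenvectorUnitary : Matrix n n ℝ)ᵀ *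
        S * hA.1.eigenvectorUnitary * diagonal (fun i => (√(hA.1.eigenvalues i))⁻¹) -
        μ • 1).PosDef ↔
      (S - μ • A).PosDef := by
  set U : Matrix n n ℝ := (hA.1.eigenvectorUnitary : Matrix n n ℝ)
  set Λ := hA.1.eigenvalues
  have hΛ : ∀ i, 0 < Λ i := hA.eigenvalues_pos
  set W := U * diagonal (fun i => √(Λ i))
  set Winv := diagonal (fun i => (√(Λ i))⁻¹) * Uᵀ
  have hWWinv : W * Winv = 1 := by
    have hsqrt_inv : diagonal (fun i => √(Λ i)) * diagonal (fun i => (√(Λ i))⁻¹) = 1 := by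
      rw [diagonal_mul_diagonal, ← diagonal_one]
      exact congrArg diagonal (funext fun i => mul_inv_cancel₀ (Real.sqrt_pos.2 (hΛ i)).ne')
    simp only [W, Winv, Matrix.mul_assoc, ← Matrix.mul_assoc (diagonal _), hsqrt_inv,
      Matrix.one_mul]
    exact hA.1.eigenvectorUnitary_mul_transpose
  have hWW : W * star W = A := by
    have hsqrt_sq : diagonal (fun i => √(Λ i)) * diagonal (fun i => √(Λ i)) = diagonal Λ := by
      rw [diagonal_mul_diagonal]
      exact congrArg diagonal (funext fun i => Real.mul_self_sqrt (hΛ i).le)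
    rw [← hA.1.eigenvectorUnitary_mul_diagonal_mul_transpose, ← hsqrt_sq]
    simp only [W, star_mul, star_eq_conjTranspose, conjTranspose_eq_transpose_of_trivial,
      diagonal_transpose, Matrix.mul_assoc]
    rfl
  have hWinv_star : star Winv = U * diagonal (fun i => (√(Λ i))⁻¹) := by
    simp [Winv, star_eq_conjTranspose]
  have hconj : W * (Winv * S * star Winv - μ • 1) * star W = S - μ • A := by
    have hWinv_cancel : W * (Winv * S * star Winv) * star W = W * Winv * S * star (W * Winv) := by
      simp only [star_mul, Matrix.mul_assoc]
    rw [Matrix.mul_sub, Matrix.sub_mul, hWinv_cancel, hWWinv, star_one, Matrix.mul_smul,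
      Matrix.smul_mul, Matrix.mul_one, Matrix.mul_one, Matrix.one_mul, hWW]
  rw [Matrix.mul_assoc (Winv * S), ← hWinv_star,
    ← IsUnit.posDef_star_right_conjugate_iff (IsUnit.of_mul_eq_one _ hWWinv), hconj]

end Matrix

theorem specNorm_transpose {N : ℕ} (A : Matrix (Fin N) (Fin N) ℝ) : specNorm Aᵀ = specNorm A := by
  rw [specNorm, specNorm, ← conjTranspose_eq_transpose_of_trivial, ← star_eq_conjTranspose,
    map_star, ContinuousLinearMap.star_eq_adjoint, LinearIsometryEquiv.norm_map]

theorem specNorm_lt_one_of_posDef_one_sub_transpose_mul_self {N : ℕ}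
    {B : Matrix (Fin N) (Fin N) ℝ} (hB : (1 - Bᵀ * B).PosDef) : specNorm B < 1 :=
  (toEuclideanCLM (𝕜 := ℝ) B).opNorm_lt_of_forall_norm_eq_one one_pos fun _ hx =>
    hx ▸ norm_toEuclideanCLM_lt_norm hB (norm_ne_zero_iff.1 (hx ▸ one_ne_zero))

/-- Stability of incremental rules on multiphase feeders: if
`0 < μ < λ_min(Λ^{-1/2}Uᵀ(X+Xᵀ)UΛ^{-1/2})` (expressed as positive definiteness of
`M − μI`, where `XXᵀ = UΛUᵀ` is the eigendecomposition), then `‖I − μX‖₂ < 1`. -/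
theorem multiphase_stability (N : ℕ) (X : Matrix (Fin N) (Fin N) ℝ)
    (hXXt : (X * Xᵀ).PosDef) (μ : ℝ) (hμ : 0 < μ)
    (D U M : Matrix (Fin N) (Fin N) ℝ)
    (hD : D = Matrix.diagonal fun i => (Real.sqrt (hXXt.1.eigenvalues i))⁻¹)
    (hU : U = (hXXt.1.eigenvectorUnitary : Matrix (Fin N) (Fin N) ℝ))
    (hM : M = D * Uᵀ * (X + Xᵀ) * U * D)
    (hμmin : (M - μ • (1 : Matrix (Fin N) (Fin N) ℝ)).PosDef) :
    specNorm (1 - μ • X) < 1 := by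
  subst hD hU hM
  have hgap : (X + Xᵀ - μ • (X * Xᵀ)).PosDef :=
    (hXXt.posDef_whiten_sub_smul_one_iff _ μ).1 hμmin
  have hcontraction : (1 - (1 - μ • X)ᵀᵀ * (1 - μ • X)ᵀ).PosDef := by
    convert hgap.smul hμ using 1
    simp only [transpose_transpose, transpose_sub, transpose_one, transpose_smul, Matrix.sub_mul,
      Matrix.mul_sub, Matrix.one_mul, Matrix.mul_one, Matrix.smul_mul, Matrix.mul_smul]
    module
  rw [← specNorm_transpose]
  exact specNorm_lt_one_of_posDef_one_sub_transpose_mul_self hcontraction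
end

section
/- Let q* and q** be the unique equilibria (fixed points) of the incremental Volt/VAR dynamics under two different grid-condition vectors ṽ₁ and ṽ₂ (same rule parameters, ‖I − μX‖₂ < 1, α̃ₙ ≤ 1). Then ‖q* − q**‖₂ ≤ (μ·max_n α̃ₙ/(1 − ρ))·‖ṽ₁ − ṽ₂‖₂ where ρ = max_n α̃ₙ · ‖I − μX‖₂; i.e., the equilibrium map ṽ ↦ q*(ṽ) is Lipschitz continuous. -/
open Matrix

lemma diag_clm_norm_le {N : ℕ} (alphat : Fin N → ℝ) (A : ℝ) (hA0 : 0 ≤ A)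
    (hle : ∀ i, |alphat i| ≤ A) (x : EuclideanSpace ℝ (Fin N)) :
    ‖Matrix.toEuclideanCLM (𝕜 := ℝ) (Matrix.diagonal alphat) x‖ ≤ A * ‖x‖ := by
  have happ : ∀ i, (Matrix.toEuclideanCLM (𝕜 := ℝ) (Matrix.diagonal alphat) x) i
      = alphat i * x i := by
    intro i
    have := congrFun (Matrix.ofLp_toEuclideanCLM (𝕜 := ℝ) (Matrix.diagonal alphat) x) i
    simpa [Matrix.mulVec_diagonal] using this
  rw [EuclideanSpace.norm_eq, EuclideanSpace.norm_eq]
  have h1 : (∑ i, ‖(Matrix.toEuclideanCLM (𝕜 := ℝ) (Matrix.diagonal alphat) x) i‖ ^ 2)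
      ≤ ∑ i, A ^ 2 * ‖x i‖ ^ 2 := by
    apply Finset.sum_le_sum
    intro i _
    rw [happ i]
    have := hle i
    have h2 : |alphat i * x i| ≤ A * |x i| := by
      rw [abs_mul]
      exact mul_le_mul_of_nonneg_right this (abs_nonneg _)
    calc ‖alphat i * x i‖ ^ 2 = |alphat i * x i| ^ 2 := by rw [Real.norm_eq_abs]
      _ ≤ (A * |x i|) ^ 2 := by
          exact pow_le_pow_left₀ (abs_nonneg _) h2 2
      _ = A ^ 2 * ‖x i‖ ^ 2 := by rw [mul_pow, Real.norm_eq_abs]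
  calc Real.sqrt (∑ i, ‖(Matrix.toEuclideanCLM (𝕜 := ℝ) (Matrix.diagonal alphat) x) i‖ ^ 2)
      ≤ Real.sqrt (∑ i, A ^ 2 * ‖x i‖ ^ 2) := Real.sqrt_le_sqrt h1
    _ = Real.sqrt (A ^ 2 * ∑ i, ‖x i‖ ^ 2) := by rw [Finset.mul_sum]
    _ = A * Real.sqrt (∑ i, ‖x i‖ ^ 2) := by
        rw [Real.sqrt_mul (by positivity), Real.sqrt_sq hA0]

/-- The equilibrium map `ṽ ↦ q*(ṽ)` of the incremental Volt/VAR dynamics is Lipschitz: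
`‖q* − q**‖₂ ≤ (μ·max_n α̃ₙ/(1 − ρ))·‖ṽ₁ − ṽ₂‖₂` where
`ρ = max_n α̃ₙ · ‖I − μX‖₂ < 1`. -/
theorem equilibrium_map_lipschitz (N : ℕ) (hN : 0 < N)
    (X : Matrix (Fin N) (Fin N) ℝ) (μ : ℝ) (hμ : 0 < μ)
    (alphat : Fin N → ℝ) (halpha : ∀ n, 0 < alphat n ∧ alphat n ≤ 1)
    (G : EuclideanSpace ℝ (Fin N) → EuclideanSpace ℝ (Fin N)) (hG : LipschitzWith 1 G)
    (vb v1 v2 : EuclideanSpace ℝ (Fin N))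
    (A ρ : ℝ) (hA : A = Finset.univ.sup' ⟨⟨0, hN⟩, Finset.mem_univ _⟩ alphat)
    (hρ : ρ = A * specNorm (1 - μ • X)) (hρ1 : ρ < 1)
    (q1 q2 : EuclideanSpace ℝ (Fin N))
    (hfix1 : q1 = G (Matrix.toEuclideanCLM (𝕜 := ℝ) (Matrix.diagonal alphat)
      (Matrix.toEuclideanCLM (𝕜 := ℝ) (1 - μ • X) q1 - μ • (v1 - vb))))
    (hfix2 : q2 = G (Matrix.toEuclideanCLM (𝕜 := ℝ) (Matrix.diagonal alphat)
      (Matrix.toEuclideanCLM (𝕜 := ℝ) (1 - μ • X) q2 - μ • (v2 - vb)))) :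
    ‖q1 - q2‖ ≤ μ * A / (1 - ρ) * ‖v1 - v2‖ := by
  set B := Matrix.toEuclideanCLM (𝕜 := ℝ) (1 - μ • X) with hB
  set D := Matrix.toEuclideanCLM (𝕜 := ℝ) (Matrix.diagonal alphat) with hD
  have hA0 : 0 < A := by
    rw [hA]
    exact lt_of_lt_of_le (halpha ⟨0, hN⟩).1 (Finset.le_sup' _ (Finset.mem_univ _))
  have hle : ∀ i, |alphat i| ≤ A := by
    intro i
    rw [abs_of_pos (halpha i).1, hA]
    exact Finset.le_sup' _ (Finset.mem_univ _)
  have hρ0 : 0 ≤ ρ := by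
    rw [hρ]; exact mul_nonneg hA0.le (norm_nonneg _)
  have hρlt : 0 < 1 - ρ := by linarith
  -- main contraction estimate
  have hlip : ‖q1 - q2‖ ≤ ‖D (B q1 - μ • (v1 - vb)) - D (B q2 - μ • (v2 - vb))‖ := by
    calc ‖q1 - q2‖ = dist q1 q2 := (dist_eq_norm _ _).symm
      _ = dist (G (D (B q1 - μ • (v1 - vb)))) (G (D (B q2 - μ • (v2 - vb)))) := by
          rw [← hfix1, ← hfix2]
      _ ≤ 1 * dist (D (B q1 - μ • (v1 - vb))) (D (B q2 - μ • (v2 - vb))) :=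
          hG.dist_le_mul _ _
      _ = ‖D (B q1 - μ • (v1 - vb)) - D (B q2 - μ • (v2 - vb))‖ := by
          rw [one_mul, dist_eq_norm]
  have hdiff : D (B q1 - μ • (v1 - vb)) - D (B q2 - μ • (v2 - vb))
      = D (B (q1 - q2) - μ • (v1 - v2)) := by
    rw [← map_sub D, map_sub B]
    congr 1
    module
  have hbound : ‖D (B (q1 - q2) - μ • (v1 - v2))‖ ≤ ρ * ‖q1 - q2‖ + A * (μ * ‖v1 - v2‖) := by
    calc ‖D (B (q1 - q2) - μ • (v1 - v2))‖
        ≤ A * ‖B (q1 - q2) - μ • (v1 - v2)‖ :=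
          diag_clm_norm_le alphat A hA0.le hle _
      _ ≤ A * (‖B (q1 - q2)‖ + ‖μ • (v1 - v2)‖) := by
          exact mul_le_mul_of_nonneg_left (norm_sub_le _ _) hA0.le
      _ ≤ A * (specNorm (1 - μ • X) * ‖q1 - q2‖ + μ * ‖v1 - v2‖) := by
          apply mul_le_mul_of_nonneg_left _ hA0.le
          gcongr
          · exact B.le_opNorm _
          · rw [norm_smul, Real.norm_eq_abs, abs_of_pos hμ]
      _ = ρ * ‖q1 - q2‖ + A * (μ * ‖v1 - v2‖) := by rw [hρ]; ring
  have hmain : ‖q1 - q2‖ ≤ ρ * ‖q1 - q2‖ + A * (μ * ‖v1 - v2‖) := by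
    calc ‖q1 - q2‖ ≤ ‖D (B (q1 - q2) - μ • (v1 - v2))‖ := by rw [← hdiff]; exact hlip
      _ ≤ _ := hbound
  rw [div_mul_eq_mul_div, le_div_iff₀ hρlt]
  nlinarith [norm_nonneg (q1 - q2), norm_nonneg (v1 - v2)]
end
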